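/- arXiv:2009.14450 — 3 statements merged into one kernel-verified Lean document; each statement's English description precedes it below -/
import Mathlib

section
/- Let α, μ, ν, ν₀, c₃'', E > 0, let φ ∈ (0, 1), let ε satisfy √φ < ε < 1, and set T = (1/ν)·ln[1 + (ν/ν₀)·(φ c₃'')/(2αμ)]. Then for every δ ≥ [ (2αμν₀/c₃'')·E + (μE + 1/√3)·φ ] / (ν₀(ε² − φ)), the inequality (2αμ/(ε c₃''))·[ E + (1/ν)(ν₀δ + μE + 1/√3)(e^{νT} − 1) ] ≤ εδ holds. -/
/-! With the chosen sampling period, `e^{νT} - 1 = (ν/ν₀)·φc₃''/(2αμ)`, so the left-hand side collapses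
to `((2αμν₀/c₃'')E + (μE + 1/√3)φ + ν₀φδ)/(ν₀ε)`. The threshold on `δ` bounds the first two terms
by `ν₀(ε² - φ)δ`, and adding `ν₀φδ` gives `ν₀ε²δ`. -/

lemma Real.exp_mul_one_div_mul_log {ν x : ℝ} (hν : ν ≠ 0) (hx : 0 < x) :
    Real.exp (ν * ((1 / ν) * Real.log x)) = x := by
  rw [← mul_assoc, mul_one_div_cancel hν, one_mul, Real.exp_log hx]

lemma drift_bound_eq {α μ ν ν₀ c E φ ε : ℝ} (hα : α ≠ 0) (hμ : μ ≠ 0) (hν : ν ≠ 0)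
    (hν₀ : ν₀ ≠ 0) (hc : c ≠ 0) (hε : ε ≠ 0) (δ s : ℝ) :
    (2 * α * μ / (ε * c)) * (E + (1 / ν) * (ν₀ * δ + μ * E + s) * ((ν / ν₀) * (φ * c) / (2 * α * μ)))
      = ((2 * α * μ * ν₀ / c) * E + (μ * E + s) * φ + ν₀ * φ * δ) / (ν₀ * ε) := by
  field_simp
  ring

lemma div_le_mul_of_threshold_le {K ν₀ φ ε δ : ℝ} (hν₀ : 0 < ν₀) (hε : 0 < ε) (hφε : φ < ε ^ 2)
    (hδ : K / (ν₀ * (ε ^ 2 - φ)) ≤ δ) :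
    (K + ν₀ * φ * δ) / (ν₀ * ε) ≤ ε * δ := by
  rw [div_le_iff₀ (by nlinarith)] at hδ
  rw [div_le_iff₀ (by positivity)]
  linarith

theorem stmt8_general (α μ ν ν₀ c₃'' E T φ ε : ℝ)
    (hα : 0 < α) (hμ : 0 < μ) (hν : 0 < ν) (hν₀ : 0 < ν₀) (hc₃ : 0 < c₃'')
    (hφ0 : 0 < φ) (hε1 : Real.sqrt φ < ε)
    (hT : T = (1 / ν) * Real.log (1 + (ν / ν₀) * (φ * c₃'') / (2 * α * μ))) :
    ∀ δ : ℝ,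
      ((2 * α * μ * ν₀ / c₃'') * E + (μ * E + 1 / Real.sqrt 3) * φ) / (ν₀ * (ε ^ 2 - φ)) ≤ δ →
      (2 * α * μ / (ε * c₃'')) *
          (E + (1 / ν) * (ν₀ * δ + μ * E + 1 / Real.sqrt 3) * (Real.exp (ν * T) - 1)) ≤ ε * δ := by
  intro δ hδ
  have hε : 0 < ε := (Real.sqrt_nonneg φ).trans_lt hε1
  have hφε : φ < ε ^ 2 := (Real.sqrt_lt' hε).1 hε1
  have hgrowth : Real.exp (ν * T) - 1 = (ν / ν₀) * (φ * c₃'') / (2 * α * μ) := by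
    rw [hT, Real.exp_mul_one_div_mul_log hν.ne' (by positivity), add_sub_cancel_left]
  rw [hgrowth, drift_bound_eq hα.ne' hμ.ne' hν.ne' hν₀.ne' hc₃.ne' hε.ne']
  exact div_le_mul_of_threshold_le hν₀ hε hφε hδ

/-- the key algebraic step of Theorem 3. With
`T = (1/ν)·ln[1 + (ν/ν₀)·(φc₃'')/(2αμ)]`, `φ ∈ (0,1)`, `√φ < ε < 1`, every
`δ ≥ [(2αμν₀/c₃'')E + (μE + 1/√3)φ]/(ν₀(ε² − φ))` satisfies
`(2αμ/(εc₃''))·[E + (1/ν)(ν₀δ + μE + 1/√3)(e^{νT} − 1)] ≤ εδ`. -/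
theorem stmt8 (α μ ν ν₀ c₃'' E T φ ε : ℝ)
    (hα : 0 < α) (hμ : 0 < μ) (hν : 0 < ν) (hν₀ : 0 < ν₀) (hc₃ : 0 < c₃'') (hE : 0 < E)
    (hφ0 : 0 < φ) (hφ1 : φ < 1) (hε1 : Real.sqrt φ < ε) (hε2 : ε < 1)
    (hT : T = (1 / ν) * Real.log (1 + (ν / ν₀) * (φ * c₃'') / (2 * α * μ))) :
    ∀ δ : ℝ,
      ((2 * α * μ * ν₀ / c₃'') * E + (μ * E + 1 / Real.sqrt 3) * φ) / (ν₀ * (ε ^ 2 - φ)) ≤ δ →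
      (2 * α * μ / (ε * c₃'')) *
          (E + (1 / ν) * (ν₀ * δ + μ * E + 1 / Real.sqrt 3) * (Real.exp (ν * T) - 1)) ≤ ε * δ :=
  stmt8_general α μ ν ν₀ c₃'' E T φ ε hα hμ hν hν₀ hc₃ hφ0 hε1 hT
end

section
/- Let p, C_f, C₀, C_η, δ_s ≥ 0 with K := pC_f + C₀ > 0, let T > C_η, let h > K, and define δ_c = (hC_η + δ_s K)/(h − K) and Δ = δ_c + δ_s. Then the two conditions δ_c ≤ T and h ≤ Δ hold simultaneously if and only if h lies in the interval [ ((T + δ_s)/(T − C_η))·K , δ_s + C_η + K ]. -/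
/-- feasible step-size range, eq. (26): with `K = pC_f + C₀ > 0`, `T > C_η`,
`h > K`, `δ_c = (hC_η + δ_sK)/(h − K)` and `Δ = δ_c + δ_s`, the conditions `δ_c ≤ T` and
`h ≤ Δ` hold simultaneously iff `h ∈ [((T + δ_s)/(T − C_η))K, δ_s + C_η + K]`. -/
theorem stmt11 (p Cf C₀ Cη δs T h K δc Δ : ℝ)
    (hp : 0 ≤ p) (hCf : 0 ≤ Cf) (hC₀ : 0 ≤ C₀) (hCη : 0 ≤ Cη) (hδs : 0 ≤ δs)
    (hK : K = p * Cf + C₀) (hKpos : 0 < K) (hT : Cη < T) (hh : K < h)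
    (hδc : δc = (h * Cη + δs * K) / (h - K)) (hΔ : Δ = δc + δs) :
    (δc ≤ T ∧ h ≤ Δ) ↔ h ∈ Set.Icc (((T + δs) / (T - Cη)) * K) (δs + Cη + K) := by
  have hhK : 0 < h - K := by linarith
  have hTC : 0 < T - Cη := by linarith
  have h0 : 0 < h := by linarith
  subst hδc hΔ
  constructor
  · rintro ⟨h1, h2⟩
    rw [div_le_iff₀ hhK] at h1
    rw [← sub_le_iff_le_add, le_div_iff₀ hhK] at h2
    constructor
    · rw [div_mul_eq_mul_div, div_le_iff₀ hTC]
      nlinarith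
    · nlinarith
  · rintro ⟨h1, h2⟩
    rw [div_mul_eq_mul_div, div_le_iff₀ hTC] at h1
    constructor
    · rw [div_le_iff₀ hhK]; nlinarith
    · rw [← sub_le_iff_le_add, le_div_iff₀ hhK]; nlinarith
end

section
/- Let C_f, C₀, C_η, δ_s ≥ 0 with K := pC_f + C₀ > 0, δ_s + C_η > 0, and T > C_η. Then the interval [ ((T + δ_s)/(T − C_η))·K , δ_s + C_η + K ] is nonempty (i.e., ((T + δ_s)/(T − C_η))·K ≤ δ_s + C_η + K) if and only if T ≥ C_η + pC_f + C₀. -/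
/-- with `K = pC_f + C₀ > 0`, `δ_s + C_η > 0`, `T > C_η`, the step-size interval
`[((T + δ_s)/(T − C_η))K, δ_s + C_η + K]` is nonempty iff `T ≥ C_η + pC_f + C₀`. -/
theorem stmt12 (p Cf C₀ Cη δs T K : ℝ)
    (hCf : 0 ≤ Cf) (hC₀ : 0 ≤ C₀) (hCη : 0 ≤ Cη) (hδs : 0 ≤ δs)
    (hK : K = p * Cf + C₀) (hKpos : 0 < K) (hpos : 0 < δs + Cη) (hT : Cη < T) :
    ((T + δs) / (T - Cη)) * K ≤ δs + Cη + K ↔ Cη + p * Cf + C₀ ≤ T := by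
  have hD : 0 < T - Cη := by linarith
  rw [div_mul_eq_mul_div, div_le_iff₀ hD]
  constructor <;> intro h <;> nlinarith [mul_pos hpos hD, mul_le_mul_of_nonneg_left h hpos.le]
end
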